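/- arXiv:2009.14359 — 4 statements merged into one kernel-verified Lean document; each statement's English description precedes it below -/
import Mathlib

section
/- If f : ℤ → ℚ is a nonzero q-periodic function and the sum ∑_{n=1}^∞ f(n)/n converges, then ∑_{n=1}^{q} f(n) = 0. -/
open Filter Topology

private lemma per_nat (q : ℕ) (f : ℤ → ℚ) (hper : ∀ n : ℤ, f (n + q) = f n) :
    ∀ (k : ℕ) (n : ℤ), f (n + k * q) = f n := by
  intro k
  induction k with
  | zero => simp
  | succ k ih =>
    intro n
    have : n + (k + 1 : ℕ) * q = (n + k * q) + q := by push_cast; ring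
    rw [this, hper, ih]

/-- If `f : ℤ → ℚ` is a nonzero `q`-periodic function and `∑_{n=1}^∞ f(n)/n`
converges, then `∑_{n=1}^{q} f(n) = 0`. -/
theorem chowla_sum_over_period_eq_zero (q : ℕ) (hq : 0 < q) (f : ℤ → ℚ)
    (hf : f ≠ 0) (hper : ∀ n : ℤ, f (n + q) = f n) (L : ℝ)
    (hconv : Tendsto (fun N : ℕ => ∑ n ∈ Finset.range N, (f (n + 1) : ℝ) / (n + 1))
      atTop (𝓝 L)) :
    ∑ n ∈ Finset.range q, f (n + 1) = 0 := by
  by_contra hS0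
  set S : ℝ := ∑ n ∈ Finset.range q, (f (n + 1) : ℝ) with hSdef
  have hS : S ≠ 0 := by
    simp only [hSdef]
    rw [← Rat.cast_sum]
    exact_mod_cast fun h => hS0 (by exact_mod_cast h)
  have hq' : (0 : ℝ) < q := Nat.cast_pos.mpr hq
  -- error terms
  set e : ℕ → ℝ := fun k =>
    ∑ r ∈ Finset.range q,
      ((f (r + 1) : ℝ) / ((k * q + r : ℕ) + 1) - (f (r + 1) : ℝ) / (q * (k + 1))) with he_def
  -- bound on error terms
  set C : ℝ := ∑ r ∈ Finset.range q, |(f (r + 1) : ℝ)| * q with hC_def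
  have hebound : ∀ k : ℕ, |e k| ≤ C / ((k : ℝ) + 1) ^ 2 := by
    intro k
    have h1 : ∀ r ∈ Finset.range q,
        |(f (r + 1) : ℝ) / ((k * q + r : ℕ) + 1) - (f (r + 1) : ℝ) / (q * (k + 1))|
          ≤ (|(f (r + 1) : ℝ)| * q) / ((k : ℝ) + 1) ^ 2 := by
      intro r hr
      have hrq : (r : ℝ) < q := by exact_mod_cast Finset.mem_range.mp hr
      have hd1 : (0 : ℝ) < (k * q + r : ℕ) + 1 := by positivity
      have hd2 : (0 : ℝ) < (q : ℝ) * (k + 1) := by positivity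
      have hk1 : (0 : ℝ) < (k : ℝ) + 1 := by positivity
      have hA : ((k : ℝ) + 1) ≤ ((k * q + r : ℕ) : ℝ) + 1 := by
        push_cast
        have : (k : ℝ) ≤ (k : ℝ) * q := by
          nlinarith [(Nat.one_le_cast (α := ℝ)).mpr hq]
        linarith [Nat.cast_nonneg (α := ℝ) r]
      have hB : ((k : ℝ) + 1) ≤ (q : ℝ) * (k + 1) := by
        nlinarith [(Nat.one_le_cast (α := ℝ)).mpr hq]
      rw [div_sub_div _ _ (ne_of_gt hd1) (ne_of_gt hd2), abs_div]
      have hnum : |(f (r + 1) : ℝ) * ((q : ℝ) * (k + 1)) - (((k * q + r : ℕ) : ℝ) + 1) * (f (r + 1) : ℝ)|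
          ≤ |(f (r + 1) : ℝ)| * q := by
        rw [mul_comm (((k * q + r : ℕ) : ℝ) + 1), ← mul_sub, abs_mul]
        have : |(q : ℝ) * (k + 1) - (((k * q + r : ℕ) : ℝ) + 1)| ≤ q := by
          rw [abs_le]
          push_cast
          constructor <;> nlinarith
        exact mul_le_mul_of_nonneg_left this (abs_nonneg _)
      have hden : ((k : ℝ) + 1) ^ 2 ≤ |(((k * q + r : ℕ) : ℝ) + 1) * ((q : ℝ) * (k + 1))| := by
        rw [abs_of_pos (by positivity)]
        calc ((k : ℝ) + 1) ^ 2 = ((k : ℝ) + 1) * ((k : ℝ) + 1) := sq ((k:ℝ)+1)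
          _ ≤ (((k * q + r : ℕ) : ℝ) + 1) * ((q : ℝ) * (k + 1)) :=
            mul_le_mul hA hB (le_of_lt hk1) (le_of_lt hd1)
      calc |(f (r + 1) : ℝ) * ((q : ℝ) * (k + 1)) - (((k * q + r : ℕ) : ℝ) + 1) * (f (r + 1) : ℝ)|
            / |(((k * q + r : ℕ) : ℝ) + 1) * ((q : ℝ) * (k + 1))|
          ≤ (|(f (r + 1) : ℝ)| * q) / (((k : ℝ) + 1) ^ 2) := by
            apply div_le_div₀ (by positivity) hnum (by positivity) hden
        _ = _ := rfl
    calc |e k| ≤ ∑ r ∈ Finset.range q,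
          |(f (r + 1) : ℝ) / ((k * q + r : ℕ) + 1) - (f (r + 1) : ℝ) / (q * (k + 1))| :=
            Finset.abs_sum_le_sum_abs _ _
      _ ≤ ∑ r ∈ Finset.range q, (|(f (r + 1) : ℝ)| * q) / ((k : ℝ) + 1) ^ 2 :=
            Finset.sum_le_sum h1
      _ = C / ((k : ℝ) + 1) ^ 2 := by rw [hC_def, Finset.sum_div]
  -- summability of e
  have hsum2 : Summable (fun k : ℕ => C / ((k : ℝ) + 1) ^ 2) := by
    have h0 : Summable (fun n : ℕ => 1 / (n : ℝ) ^ 2) :=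
      Real.summable_one_div_nat_pow.mpr one_lt_two
    have h1 : Summable (fun n : ℕ => 1 / ((n : ℝ) + 1) ^ 2) := by
      have := (summable_nat_add_iff (f := fun n : ℕ => 1 / (n : ℝ) ^ 2) 1).mpr h0
      simpa [Nat.cast_add] using this
    simpa [div_eq_mul_inv, mul_comm, mul_assoc, one_div] using h1.mul_left C
  have he_sum : Summable e :=
    Summable.of_abs (hsum2.of_nonneg_of_le (fun k => abs_nonneg _) hebound)
  -- key identity for partial sums at multiples of q
  have key : ∀ K : ℕ, ∑ n ∈ Finset.range (K * q), (f (n + 1) : ℝ) / (n + 1)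
      = (S / q) * (∑ k ∈ Finset.range K, 1 / ((k : ℝ) + 1)) + ∑ k ∈ Finset.range K, e k := by
    intro K
    induction K with
    | zero => simp
    | succ K ih =>
      have hsplit : (K + 1) * q = K * q + q := by ring
      rw [hsplit, Finset.sum_range_add, ih, Finset.sum_range_succ, Finset.sum_range_succ]
      have hblock : ∑ r ∈ Finset.range q, (f ((K * q + r : ℕ) + 1) : ℝ) / (((K * q + r : ℕ) : ℝ) + 1)
          = (S / q) * (1 / ((K : ℝ) + 1)) + e K := by
        have hper' : ∀ r : ℕ, f (((K * q + r : ℕ) : ℤ) + 1) = f (r + 1) := by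
          intro r
          have h1 : (((K * q + r : ℕ) : ℤ) + 1) = ((r : ℤ) + 1) + (K : ℕ) * (q : ℤ) := by
            push_cast; ring
          rw [h1]
          exact_mod_cast per_nat q f hper K ((r : ℤ) + 1)
        have : ∑ r ∈ Finset.range q, (f ((K * q + r : ℕ) + 1) : ℝ) / (((K * q + r : ℕ) : ℝ) + 1)
            = ∑ r ∈ Finset.range q, (f (r + 1) : ℝ) / (((K * q + r : ℕ) : ℝ) + 1) := by
          refine Finset.sum_congr rfl fun r _ => ?_
          rw [hper' r]
        rw [this, he_def]
        have hSd : (S / q) * (1 / ((K : ℝ) + 1)) = ∑ r ∈ Finset.range q, (f (r + 1) : ℝ) / (q * (K + 1)) := by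
          rw [hSdef, Finset.sum_div, Finset.sum_mul]
          refine Finset.sum_congr rfl fun r _ => ?_
          rw [div_mul_div_comm, mul_one]
        rw [hSd, ← Finset.sum_add_distrib]
        refine Finset.sum_congr rfl fun r _ => ?_
        ring
      rw [hblock]
      ring
  -- limits
  have hmul : Tendsto (fun K : ℕ => K * q) atTop atTop :=
    Filter.tendsto_atTop_mono (fun K => Nat.le_mul_of_pos_right K hq) tendsto_id
  have hTq : Tendsto (fun K : ℕ => ∑ n ∈ Finset.range (K * q), (f (n + 1) : ℝ) / (n + 1))
      atTop (𝓝 L) := hconv.comp hmul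
  have hE : Tendsto (fun K : ℕ => ∑ k ∈ Finset.range K, e k) atTop (𝓝 (∑' k, e k)) :=
    he_sum.hasSum.tendsto_sum_nat
  have hH : Tendsto (fun K : ℕ => (S / q) * (∑ k ∈ Finset.range K, 1 / ((k : ℝ) + 1)))
      atTop (𝓝 (L - ∑' k, e k)) := by
    have := hTq.sub hE
    refine this.congr fun K => ?_
    rw [key K]; ring
  have hharm : Tendsto (fun K : ℕ => ∑ k ∈ Finset.range K, 1 / ((k : ℝ) + 1)) atTop atTop :=
    Real.tendsto_sum_range_one_div_nat_succ_atTop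
  rcases lt_or_gt_of_ne hS with hneg | hpos
  · have hr : (0 : ℝ) < -(S / q) := neg_pos.mpr (div_neg_of_neg_of_pos hneg hq')
    have h1 : Tendsto (fun K : ℕ => (-(S / q)) * (∑ k ∈ Finset.range K, 1 / ((k : ℝ) + 1)))
        atTop atTop := hharm.const_mul_atTop hr
    have h2 : Tendsto (fun K : ℕ => (-(S / q)) * (∑ k ∈ Finset.range K, 1 / ((k : ℝ) + 1)))
        atTop (𝓝 (-(L - ∑' k, e k))) := by
      have := hH.neg
      refine this.congr fun K => ?_
      ring
    exact not_tendsto_atTop_of_tendsto_nhds h2 h1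
  · have h1 : Tendsto (fun K : ℕ => (S / q) * (∑ k ∈ Finset.range K, 1 / ((k : ℝ) + 1)))
        atTop atTop := hharm.const_mul_atTop (div_pos hpos hq')
    exact not_tendsto_atTop_of_tendsto_nhds hH h1
end

section
/- If χ is a non-principal Dirichlet character modulo k, then L(1,χ) = ∑_{n=1}^∞ χ(n)/n ≠ 0. -/
open Filter Topology

/-- If `χ` is a non-principal Dirichlet character modulo `k`, then
`L(1,χ) = ∑_{n=1}^∞ χ(n)/n ≠ 0`. -/
theorem LOne_nonprincipal_ne_zero (k : ℕ) [NeZero k]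
    (χ : DirichletCharacter ℂ k) (hχ : χ ≠ 1) (L : ℂ)
    (hconv : Tendsto (fun N : ℕ => ∑ n ∈ Finset.range N, χ ((n + 1 : ℕ) : ZMod k) / (n + 1))
      atTop (𝓝 L)) :
    L ≠ 0 := by
  classical
  set S : ℕ → ℂ := fun N => ∑ n ∈ Finset.range N, χ ((n + 1 : ℕ) : ZMod k) / (n + 1) with hSdef
  set b : ℝ → ℕ → ℝ := fun ε i => ((i : ℝ) + 1) ^ (-ε) with hbdef
  have hb0 : ∀ ε : ℝ, b ε 0 = 1 := by intro ε; simp [hbdef]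
  have hbpos : ∀ ε : ℝ, ∀ i : ℕ, 0 < b ε i := by
    intro ε i; exact Real.rpow_pos_of_pos (by positivity) _
  have hbanti : ∀ ε : ℝ, 0 ≤ ε → ∀ i j : ℕ, i ≤ j → b ε j ≤ b ε i := by
    intro ε hε i j hij
    have hc := (Nat.cast_le (α := ℝ)).mpr hij
    exact Real.rpow_le_rpow_of_nonpos (by positivity) (by linarith) (by linarith)
  -- Main claim: LFunction χ (1+ε) → L as ε → 0⁺
  have main : Tendsto (fun ε : ℝ => DirichletCharacter.LFunction χ (1 + ε)) (𝓝[>] 0) (𝓝 L) := by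
    rw [Metric.tendsto_nhds]
    intro δ hδ
    -- choose N₀ from convergence of S
    obtain ⟨N₀, hN₀⟩ := (Metric.tendsto_atTop.mp hconv) (δ / 4) (by linarith)
    set K : ℝ := ∑ i ∈ Finset.range N₀, ‖S (i + 1) - L‖ with hKdef
    have hK0 : 0 ≤ K := Finset.sum_nonneg fun i _ => norm_nonneg _
    -- The key uniform bound, for every ε > 0 :
    have key : ∀ ε : ℝ, 0 < ε →
        ‖DirichletCharacter.LFunction χ (1 + ε) - L‖ ≤ K * (1 - b ε N₀) + δ / 2 := by
      intro ε hε
      set Q : ℕ → ℂ := fun N => ∑ i ∈ Finset.range N,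
        ((b ε i - b ε (i + 1) : ℝ) : ℂ) * (S (i + 1) - L) with hQdef
      -- partial sums of the L-series
      set T : ℕ → ℂ := fun N => ∑ i ∈ Finset.range N,
        (χ ((i + 1 : ℕ) : ZMod k) / ((i : ℂ) + 1)) * ((b ε i : ℝ) : ℂ) with hTdef
      have h1re : 1 < Complex.re (1 + ε) := by simp [Complex.add_re]; positivity
      have hsum : LSeriesSummable (χ ·) (1 + ε) := ZMod.LSeriesSummable_of_one_lt_re χ h1re
      have hterm : ∀ i : ℕ, LSeries.term (χ ·) (1 + ε) (i + 1)
          = (χ ((i+1 : ℕ) : ZMod k) / ((i:ℂ)+1)) * ((b ε i : ℝ) : ℂ) := by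
        intro i
        rw [LSeries.term_of_ne_zero (Nat.succ_ne_zero i)]
        have h0 : ((i:ℂ)+1) ≠ 0 := by
          exact_mod_cast (Nat.cast_ne_zero (R := ℂ)).mpr (Nat.succ_ne_zero i)
        have hb : ((b ε i : ℝ) : ℂ) = ((i:ℂ)+1) ^ (-(ε:ℂ)) := by
          rw [hbdef]
          rw [show ((i:ℂ)+1) = ((((i:ℝ)+1) : ℝ) : ℂ) by push_cast; ring,
            show (-(ε:ℂ)) = ((-ε : ℝ) : ℂ) by push_cast; ring,
            ← Complex.ofReal_cpow (by positivity)]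
        rw [hb, Complex.cpow_neg]
        have hc : ((i+1 : ℕ) : ℂ) ^ ((1:ℂ) + ε) = ((i:ℂ)+1) * ((i:ℂ)+1) ^ (ε:ℂ) := by
          push_cast
          rw [Complex.cpow_add _ _ h0, Complex.cpow_one]
        push_cast at hc ⊢
        rw [hc]
        have h1 : ((i:ℂ)+1) ^ (ε:ℂ) ≠ 0 := by
          intro h
          exact h0 (by simpa using Complex.cpow_eq_zero_iff _ _ |>.mp h |>.1)
        field_simp
      -- T tends to LFunction χ (1+ε)
      have hT : Tendsto T atTop (𝓝 (DirichletCharacter.LFunction χ (1 + ε))) := by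
        have h2 := hsum.hasSum.tendsto_sum_nat
        have h3 : Tendsto (fun N => ∑ i ∈ Finset.range (N + 1), LSeries.term (χ ·) (1 + ε) i)
            atTop (𝓝 (LSeries (χ ·) (1 + ε))) := h2.comp (tendsto_add_atTop_nat 1)
        have h4 : ∀ N, ∑ i ∈ Finset.range (N + 1), LSeries.term (χ ·) (1 + ε) i = T N := by
          intro N
          rw [Finset.sum_range_succ']
          simp only [hterm, LSeries.term_zero, add_zero, hTdef]
        rw [DirichletCharacter.LFunction_eq_LSeries χ h1re]
        exact h3.congr h4
      -- Abel summation identity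
      have habel : ∀ N : ℕ, ∑ i ∈ Finset.range N, ((b ε i - b ε (i + 1) : ℝ) : ℂ) * S (i + 1)
          = T (N + 1) - ((b ε N : ℝ) : ℂ) * S (N + 1) := by
        intro N
        induction N with
        | zero => simp [hTdef, hSdef, hb0 ε, Finset.sum_range_succ]
        | succ N ih =>
          rw [Finset.sum_range_succ, ih]
          have hT' : T (N + 1 + 1) = T (N + 1)
              + (χ (((N + 1) + 1 : ℕ) : ZMod k) / (((N + 1 : ℕ) : ℂ) + 1)) * ((b ε (N + 1) : ℝ) : ℂ) :=
            Finset.sum_range_succ _ (N + 1)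
          have hS' : S (N + 1 + 1) = S (N + 1)
              + χ (((N + 1) + 1 : ℕ) : ZMod k) / (((N + 1 : ℕ) : ℂ) + 1) :=
            Finset.sum_range_succ _ (N + 1)
          rw [hT', hS']
          push_cast
          ring
      -- Q tends to LFunction χ (1+ε) - L
      have hbtend : Tendsto (fun N : ℕ => b ε N) atTop (𝓝 0) := by
        have := (tendsto_rpow_neg_atTop hε).comp
          (tendsto_atTop_add_const_right atTop (1 : ℝ) tendsto_natCast_atTop_atTop)
        exact this
      have hQ : Tendsto Q atTop (𝓝 (DirichletCharacter.LFunction χ (1 + ε) - L)) := by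
        have hP : Tendsto (fun N => T (N + 1) - ((b ε N : ℝ) : ℂ) * S (N + 1)) atTop
            (𝓝 (DirichletCharacter.LFunction χ (1 + ε) - 0 * L)) := by
          exact (hT.comp (tendsto_add_atTop_nat 1)).sub
            (((Complex.continuous_ofReal.tendsto 0).comp hbtend).mul
              (hconv.comp (tendsto_add_atTop_nat 1)))
        rw [zero_mul, sub_zero] at hP
        have hone : Tendsto (fun N : ℕ => ((1 - b ε N : ℝ) : ℂ) * L) atTop (𝓝 L) := by
          have : Tendsto (fun N : ℕ => ((1 - b ε N : ℝ) : ℂ)) atTop (𝓝 1) := by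
            have h := (Complex.continuous_ofReal.tendsto (1 - 0)).comp
              (tendsto_const_nhds.sub hbtend)
            simpa [Function.comp_def] using h
          simpa using this.mul (tendsto_const_nhds (x := L))
        have hQeq : ∀ N, Q N = (T (N + 1) - ((b ε N : ℝ) : ℂ) * S (N + 1))
            - ((1 - b ε N : ℝ) : ℂ) * L := by
          intro N
          rw [hQdef]
          simp only [mul_sub, Finset.sum_sub_distrib, habel N, ← Finset.sum_mul]
          have : ∑ i ∈ Finset.range N, ((b ε i - b ε (i + 1) : ℝ) : ℂ)
              = ((1 - b ε N : ℝ) : ℂ) := by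
            push_cast
            rw [Finset.sum_range_sub' (f := fun i => ((b ε i : ℝ) : ℂ))]
            rw [hb0 ε]
            push_cast
            ring
          rw [this]
        have := hP.sub hone
        exact (this.congr fun N => (hQeq N).symm)
      -- norm bound on Q N, uniform in N
      have hQbound : ∀ N : ℕ, ‖Q N‖ ≤ K * (1 - b ε N₀) + δ / 2 := by
        intro N
        have h1 : ‖Q N‖ ≤ ∑ i ∈ Finset.range N, (b ε i - b ε (i + 1)) * ‖S (i + 1) - L‖ := by
          refine (norm_sum_le _ _).trans (le_of_eq (Finset.sum_congr rfl fun i _ => ?_))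
          rw [norm_mul, Complex.norm_real, Real.norm_eq_abs,
            abs_of_nonneg (by linarith [hbanti ε hε.le i (i+1) (Nat.le_succ i)])]
        refine h1.trans ?_
        rw [← Finset.sum_filter_add_sum_filter_not (Finset.range N) (· < N₀)]
        have hhead : ∑ i ∈ (Finset.range N).filter (· < N₀),
            (b ε i - b ε (i + 1)) * ‖S (i + 1) - L‖ ≤ K * (1 - b ε N₀) := by
          have step1 : ∑ i ∈ (Finset.range N).filter (· < N₀),
              (b ε i - b ε (i + 1)) * ‖S (i + 1) - L‖
              ≤ ∑ i ∈ (Finset.range N).filter (· < N₀), (1 - b ε N₀) * ‖S (i + 1) - L‖ := by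
            refine Finset.sum_le_sum fun i hi => ?_
            have hiN₀ : i < N₀ := (Finset.mem_filter.mp hi).2
            have h2 : b ε i ≤ 1 := by
              rw [← hb0 ε]; exact hbanti ε hε.le 0 i (Nat.zero_le i)
            have h3 : b ε N₀ ≤ b ε (i + 1) := hbanti ε hε.le (i + 1) N₀ hiN₀
            exact mul_le_mul_of_nonneg_right (by linarith) (norm_nonneg _)
          refine step1.trans ?_
          have step2 : ∑ i ∈ (Finset.range N).filter (· < N₀), (1 - b ε N₀) * ‖S (i + 1) - L‖
              ≤ ∑ i ∈ Finset.range N₀, (1 - b ε N₀) * ‖S (i + 1) - L‖ := by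
            refine Finset.sum_le_sum_of_subset_of_nonneg ?_ fun i _ _ => ?_
            · intro i hi
              exact Finset.mem_range.mpr (Finset.mem_filter.mp hi).2
            · have h2 : b ε N₀ ≤ 1 := by
                rw [← hb0 ε]; exact hbanti ε hε.le 0 N₀ (Nat.zero_le N₀)
              have h3 := norm_nonneg (S (i + 1) - L)
              nlinarith
          refine step2.trans (le_of_eq ?_)
          rw [← Finset.mul_sum, ← hKdef]
          ring
        have htail : ∑ i ∈ (Finset.range N).filter (¬ · < N₀),
            (b ε i - b ε (i + 1)) * ‖S (i + 1) - L‖ ≤ δ / 2 := by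
          have step1 : ∑ i ∈ (Finset.range N).filter (¬ · < N₀),
              (b ε i - b ε (i + 1)) * ‖S (i + 1) - L‖
              ≤ ∑ i ∈ (Finset.range N).filter (¬ · < N₀), (b ε i - b ε (i + 1)) * (δ / 4) := by
            refine Finset.sum_le_sum fun i hi => ?_
            have hiN₀ : N₀ ≤ i := Nat.le_of_not_lt (Finset.mem_filter.mp hi).2
            have h2 : ‖S (i + 1) - L‖ ≤ δ / 4 := by
              have := hN₀ (i + 1) (by omega)
              rw [dist_eq_norm] at this
              exact this.le
            exact mul_le_mul_of_nonneg_left h2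
              (by linarith [hbanti ε hε.le i (i+1) (Nat.le_succ i)])
          refine step1.trans ?_
          have step2 : ∑ i ∈ (Finset.range N).filter (¬ · < N₀),
              (b ε i - b ε (i + 1)) * (δ / 4)
              ≤ ∑ i ∈ Finset.range N, (b ε i - b ε (i + 1)) * (δ / 4) := by
            refine Finset.sum_le_sum_of_subset_of_nonneg (Finset.filter_subset _ _)
              fun i _ _ => ?_
            have := hbanti ε hε.le i (i+1) (Nat.le_succ i)
            have : (0:ℝ) ≤ b ε i - b ε (i + 1) := by linarith
            positivity
          refine step2.trans ?_
          rw [← Finset.sum_mul, Finset.sum_range_sub' (fun i => b ε i), hb0 ε]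
          have h2 : 0 < b ε N := hbpos ε N
          nlinarith
        linarith
      exact le_of_tendsto hQ.norm (Filter.Eventually.of_forall hQbound)
    -- eventual smallness of the bound as ε → 0⁺
    have hcont : Tendsto (fun ε : ℝ => K * (1 - b ε N₀) + δ / 2) (𝓝[>] 0) (𝓝 (δ / 2)) := by
      have h1 : Tendsto (fun ε : ℝ => b ε N₀) (𝓝 0) (𝓝 1) := by
        have h2 : ContinuousAt (fun ε : ℝ => ((N₀ : ℝ) + 1) ^ (-ε)) 0 := by
          exact (Real.continuousAt_const_rpow (by positivity)).comp (continuous_neg.continuousAt)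
        have h3 := h2.tendsto
        simpa using h3
      have h4 : Tendsto (fun ε : ℝ => K * (1 - b ε N₀) + δ / 2) (𝓝 0)
          (𝓝 (K * (1 - 1) + δ / 2)) :=
        ((tendsto_const_nhds.sub h1).const_mul K).add tendsto_const_nhds
      simpa using h4.mono_left nhdsWithin_le_nhds
    have hev : ∀ᶠ ε : ℝ in 𝓝[>] 0, K * (1 - b ε N₀) + δ / 2 < δ :=
      hcont.eventually_lt_const (by linarith)
    filter_upwards [hev, self_mem_nhdsWithin] with ε h1 h2
    rw [dist_eq_norm]
    exact lt_of_le_of_lt (key ε h2) h1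
  -- limit of LFunction along the same path, by continuity
  have hcont : Tendsto (fun ε : ℝ => DirichletCharacter.LFunction χ (1 + ε)) (𝓝[>] 0)
      (𝓝 (DirichletCharacter.LFunction χ 1)) := by
    have h1 : Tendsto (fun ε : ℝ => (1 : ℂ) + ε) (𝓝[>] 0) (𝓝 1) := by
      have := (Complex.continuous_ofReal.tendsto 0).const_add (1 : ℂ)
      simpa using this.mono_left nhdsWithin_le_nhds
    exact ((DirichletCharacter.differentiable_LFunction hχ).continuous.continuousAt.tendsto).comp h1
  have heq : DirichletCharacter.LFunction χ 1 = L := tendsto_nhds_unique hcont main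
  intro h
  exact DirichletCharacter.LFunction_apply_one_ne_zero hχ (heq.trans h)
end

section
/- Let f : ℤ → ℂ be q-periodic with ∑_{r=1}^{q} f(r) = 0, and let g(s) = (1/q) ∑_{r=1}^{q} f(r) e^{-2πi r s/q} be its Fourier transform (so g(q) = g(0) = 0). Then ∑_{n=1}^∞ f(n)/n converges and equals -∑_{s=1}^{q-1} g(s) log(1 - e^{2πi s/q}). In particular L(1,f) = 0 if and only if ∑_{s=1}^{q-1} g(s) log(1 - e^{2πi s/q}) = 0. -/
/-!
Fourier inversion on `ZMod q` writes `f n = ∑_{s=1}^{q-1} g s ζ^{s n}` with `ζ = e^{2πi/q}`; the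
frequency `0` is absent because `f` has mean zero. Each `ζ^s` is a point of the unit circle other
than `1`, where the series `∑ z^n / n` still converges (Dirichlet's test) and its sum is
`-log (1 - z)` (Abel's limit theorem and continuity of `log` off the slit). Summing the finitely
many series gives the formula.
-/

open Filter Topology Complex Finset
open scoped Real

namespace Complex

lemma one_sub_mem_slitPlane {z : ℂ} (hz : ‖z‖ ≤ 1) (hz1 : z ≠ 1) : 1 - z ∈ slitPlane := by
  refine mem_slitPlane_iff.mpr (Or.inl ?_)
  suffices z.re < 1 by simpa using this
  refine (z.re_le_norm.trans hz).lt_of_ne fun hre ↦ hz1 ?_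
  have hnorm : ‖z‖ = 1 := le_antisymm hz (hre ▸ z.re_le_norm)
  have him : z.im = 0 := abs_re_eq_norm.mp (by rw [hre, hnorm, abs_one])
  exact ext hre him

lemma norm_sum_range_pow_succ_le {z : ℂ} (hz : ‖z‖ ≤ 1) (hz1 : z ≠ 1) (n : ℕ) :
    ‖∑ i ∈ range n, z ^ (i + 1)‖ ≤ 2 / ‖z - 1‖ := by
  have hgeom : ∑ i ∈ range n, z ^ (i + 1) = z * ((z ^ n - 1) / (z - 1)) := by
    simp only [pow_succ', ← mul_sum, geom_sum_eq hz1]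
  have hnum : ‖z ^ n - 1‖ ≤ 2 :=
    calc ‖z ^ n - 1‖ ≤ ‖z‖ ^ n + 1 := by simpa using norm_sub_le (z ^ n) 1
      _ ≤ 2 := by linarith [pow_le_one₀ (norm_nonneg z) hz (n := n)]
  rw [hgeom, norm_mul, norm_div]
  calc ‖z‖ * (‖z ^ n - 1‖ / ‖z - 1‖) ≤ 1 * (2 / ‖z - 1‖) := by gcongr
    _ = 2 / ‖z - 1‖ := one_mul _

lemma cauchySeq_sum_range_pow_succ_div {z : ℂ} (hz : ‖z‖ ≤ 1) (hz1 : z ≠ 1) :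
    CauchySeq fun N : ℕ ↦ ∑ n ∈ range N, z ^ (n + 1) / (n + 1) := by
  have hanti : Antitone fun n : ℕ ↦ ((n : ℝ) + 1)⁻¹ := fun a b hab ↦ by dsimp only; gcongr
  have hzero : Tendsto (fun n : ℕ ↦ ((n : ℝ) + 1)⁻¹) atTop (𝓝 0) := by
    simpa only [one_div] using tendsto_one_div_add_atTop_nhds_zero_nat (𝕜 := ℝ)
  convert hanti.cauchySeq_series_mul_of_tendsto_zero_of_bounded hzero
    (norm_sum_range_pow_succ_le hz hz1) using 3 with N n
  rw [real_smul, div_eq_inv_mul]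
  push_cast
  rfl

lemma tendsto_sum_range_pow_succ_div {z : ℂ} (hz : ‖z‖ ≤ 1) (hz1 : z ≠ 1) :
    Tendsto (fun N : ℕ ↦ ∑ n ∈ range N, z ^ (n + 1) / (n + 1)) atTop
      (𝓝 (-log (1 - z))) := by
  obtain ⟨l, hl⟩ := cauchySeq_tendsto_of_complete (cauchySeq_sum_range_pow_succ_div hz hz1)
  have hl' : Tendsto (fun N : ℕ ↦ ∑ n ∈ range N, z ^ n / n) atTop (𝓝 l) := by
    rw [← tendsto_add_atTop_iff_nat 1]
    simpa [sum_range_succ'] using hl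
  have habel := tendsto_tsum_powerSeries_nhdsWithin_lt hl'
  rw [tendsto_map'_iff] at habel
  have hradial : ∀ᶠ x : ℝ in 𝓝[<] 1, -log (1 - x * z) = ∑' n : ℕ, z ^ n / n * (x : ℂ) ^ n := by
    filter_upwards [Ioo_mem_nhdsLT zero_lt_one] with x hx
    have hxz : ‖(x : ℂ) * z‖ < 1 := by
      rw [norm_mul, norm_real, Real.norm_of_nonneg hx.1.le]
      nlinarith [hx.1, hx.2, norm_nonneg z]
    rw [← (hasSum_taylorSeries_neg_log hxz).tsum_eq]
    exact tsum_congr fun n ↦ by ring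
  have hcont : Tendsto (fun x : ℝ ↦ -log (1 - x * z)) (𝓝[<] 1) (𝓝 (-log (1 - z))) := by
    have h : Tendsto (fun x : ℝ ↦ 1 - (x : ℂ) * z) (𝓝 1) (𝓝 (1 - z)) := by
      simpa using (show Continuous fun x : ℝ ↦ 1 - (x : ℂ) * z by fun_prop).tendsto 1
    exact (h.clog (one_sub_mem_slitPlane hz hz1)).neg.mono_left nhdsWithin_le_nhds
  rwa [tendsto_nhds_unique habel (hcont.congr' hradial)] at hl

end Complex

lemma Function.Periodic.apply_val_intCast {α : Type*} {f : ℤ → α} {q : ℕ} [NeZero q]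
    (hf : Function.Periodic f q) (n : ℤ) : f ((n : ZMod q).val) = f n := by
  rw [ZMod.val_intCast, Int.emod_def, mul_comm]
  exact hf.sub_int_mul_eq _

lemma ZMod.sum_Icc_one_intCast {M : Type*} [AddCommMonoid M] (q : ℕ) [NeZero q]
    (H : ZMod q → M) : ∑ r ∈ Icc (1 : ℤ) q, H r = ∑ x, H x := by
  refine sum_nbij' (↑) (fun x ↦ ((x - 1).val : ℤ) + 1) (fun _ _ ↦ mem_univ _) ?_ ?_ ?_
    fun _ _ ↦ rfl
  · intro x _
    have := (x - 1).val_lt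
    simp only [mem_Icc]
    omega
  · intro r hr
    simp only [mem_Icc] at hr
    rw [← Int.cast_one, ← Int.cast_sub, ZMod.val_intCast, Int.emod_eq_of_lt] <;> omega
  · intro x _
    simp

lemma exp_two_pi_I_mul_div_ne_one (q : ℕ) [NeZero q] {s : ℤ} (hs : ¬ (q : ℤ) ∣ s) :
    exp (2 * π * I * s / q) ≠ 1 := by
  rw [← ZMod.stdAddChar_coe, ← AddChar.map_zero_eq_one (ZMod.stdAddChar (N := q)),
    ZMod.injective_stdAddChar.ne_iff, Ne, ZMod.intCast_zmod_eq_zero_iff_dvd]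
  exact hs

lemma tendsto_sum_range_exp_pow_succ_div (q : ℕ) [NeZero q] {s : ℤ} (hs : ¬ (q : ℤ) ∣ s) :
    Tendsto (fun N : ℕ ↦ ∑ n ∈ range N, exp (2 * π * I * s / q) ^ (n + 1) / (n + 1)) atTop
      (𝓝 (-log (1 - exp (2 * π * I * s / q)))) := by
  have hnorm : ‖exp (2 * π * I * s / q)‖ ≤ 1 := by rw [norm_exp]; simp
  exact tendsto_sum_range_pow_succ_div hnorm (exp_two_pi_I_mul_div_ne_one q hs)

open ZMod in
lemma exp_pow_eq_stdAddChar (q : ℕ) [NeZero q] (s : ℤ) (n : ℕ) :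
    exp (2 * π * I * s / q) ^ n = stdAddChar ((s * n : ℤ) : ZMod q) := by
  rw [← stdAddChar_coe, ← AddChar.map_nsmul_eq_pow, nsmul_eq_mul, mul_comm]
  push_cast
  rfl

open ZMod in
/-- `g` is `q⁻¹ • 𝓕 F` for the function `F` that `f` induces on `ZMod q`, so this is Fourier
inversion; the frequency `s = q` drops out because `g q` is the mean of `f`. -/
lemma sum_Icc_mul_exp_pow_eq (q : ℕ) [NeZero q] (f : ℤ → ℂ) (hper : Function.Periodic f q)
    (hsum : ∑ r ∈ Icc (1 : ℤ) q, f r = 0) (g : ℤ → ℂ)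
    (hg : ∀ s : ℤ, g s = (1 / (q : ℂ)) * ∑ r ∈ Icc (1 : ℤ) q,
      f r * exp (-2 * (π : ℂ) * I * r * s / q)) (n : ℕ) :
    ∑ s ∈ Icc (1 : ℤ) (q - 1), g s * exp (2 * π * I * s / q) ^ n = f n := by
  set F : ZMod q → ℂ := fun x ↦ f x.val
  have hfF (r : ℤ) : f r = F r := (hper.apply_val_intCast r).symm
  have hgF (s : ℤ) : g s = (q : ℂ)⁻¹ * 𝓕 F s := by
    rw [hg, one_div, dft_apply, ← sum_Icc_one_intCast]
    congr 1
    refine sum_congr rfl fun r _ ↦ ?_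
    rw [hfF, smul_eq_mul, mul_comm, ← Int.cast_mul, ← Int.cast_neg, stdAddChar_coe]
    push_cast
    ring_nf
  have hgq : g q = 0 := by
    rw [hgF, Int.cast_natCast, ZMod.natCast_self, dft_apply_zero, ← sum_Icc_one_intCast]
    simp only [← hfF, hsum, mul_zero]
  calc ∑ s ∈ Icc (1 : ℤ) (q - 1), g s * exp (2 * π * I * s / q) ^ n
      = ∑ s ∈ Icc (1 : ℤ) q, g s * stdAddChar ((s * n : ℤ) : ZMod q) := by
        have hq : (1 : ℤ) ≤ q := by have := NeZero.pos q; omega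
        rw [← insert_Icc_sub_one_right_eq_Icc hq, sum_insert (by simp), hgq, zero_mul, zero_add]
        simp only [exp_pow_eq_stdAddChar]
    _ = 𝓕⁻ (𝓕 F) n := by
        rw [invDFT_apply, smul_eq_mul, mul_sum, ← sum_Icc_one_intCast]
        refine sum_congr rfl fun s _ ↦ ?_
        rw [hgF, Int.cast_mul, Int.cast_natCast]
        ring
    _ = f n := by rw [LinearEquiv.symm_apply_apply, hfF, Int.cast_natCast]

/-- For `f : ℤ → ℂ` `q`-periodic with vanishing sum over a period and discrete
Fourier transform `g`, the series `∑_{n=1}^∞ f(n)/n` converges to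
`-∑_{s=1}^{q-1} g(s) log(1 - e^{2πi s/q})`; in particular `L(1,f) = 0` iff
`∑_{s=1}^{q-1} g(s) log(1 - e^{2πi s/q}) = 0`. -/
theorem LOne_eq_neg_sum_g_log (q : ℕ) (hq : 0 < q) (f : ℤ → ℂ)
    (hper : ∀ n : ℤ, f (n + q) = f n)
    (hsum : ∑ r ∈ Finset.Icc (1 : ℤ) q, f r = 0) (g : ℤ → ℂ)
    (hg : ∀ s : ℤ, g s = (1 / (q : ℂ)) * ∑ r ∈ Finset.Icc (1 : ℤ) q,
      f r * Complex.exp (-2 * (Real.pi : ℂ) * Complex.I * r * s / q)) :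
    Tendsto (fun N : ℕ => ∑ n ∈ Finset.range N, f (n + 1) / (n + 1)) atTop
      (𝓝 (-∑ s ∈ Finset.Icc (1 : ℤ) (q - 1),
        g s * Complex.log (1 - Complex.exp (2 * (Real.pi : ℂ) * Complex.I * s / q)))) ∧
    (∀ L : ℂ, Tendsto (fun N : ℕ => ∑ n ∈ Finset.range N, f (n + 1) / (n + 1)) atTop (𝓝 L) →
      (L = 0 ↔ ∑ s ∈ Finset.Icc (1 : ℤ) (q - 1),
        g s * Complex.log (1 - Complex.exp (2 * (Real.pi : ℂ) * Complex.I * s / q)) = 0)) := by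
  have : NeZero q := ⟨hq.ne'⟩
  have hmain : Tendsto (fun N : ℕ => ∑ n ∈ range N, f (n + 1) / (n + 1)) atTop
      (𝓝 (-∑ s ∈ Icc (1 : ℤ) (q - 1), g s * log (1 - exp (2 * π * I * s / q)))) := by
    have hterm : ∀ s ∈ Icc (1 : ℤ) (q - 1), Tendsto
        (fun N : ℕ ↦ ∑ n ∈ range N, g s * (exp (2 * π * I * s / q) ^ (n + 1) / (n + 1)))
        atTop (𝓝 (g s * -log (1 - exp (2 * π * I * s / q)))) := fun s hs ↦ by
      obtain ⟨hs1, hsq⟩ := mem_Icc.mp hs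
      have hndvd : ¬ (q : ℤ) ∣ s := fun h ↦ absurd (Int.le_of_dvd (by omega) h) (by omega)
      simpa only [mul_sum] using (tendsto_sum_range_exp_pow_succ_div q hndvd).const_mul (g s)
    convert tendsto_finsetSum _ hterm using 2 with N
    · rw [sum_comm]
      refine sum_congr rfl fun n _ ↦ ?_
      have hinv := sum_Icc_mul_exp_pow_eq q f hper hsum g hg (n + 1)
      push_cast at hinv
      simp only [← hinv, sum_div, mul_div_assoc]
    · simp only [mul_neg, sum_neg_distrib]
  exact ⟨hmain, fun L hL ↦ by rw [tendsto_nhds_unique hL hmain, neg_eq_zero]⟩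
end

section
/- Let p be a prime and define f : ℤ → ℤ by f(n) = 1 - 2p·[p | n] + p²·[p² | n], where [a | n] is 1 if a divides n and 0 otherwise. Then f is periodic with period p², f does not vanish on all residues r with 1 < gcd(r, p²) < p², and ∑_{n=1}^∞ f(n)/n = 0. -/
/-!
Periodicity is clear and `r = p` is a witness, as `f(p) = 1 - 2p`. Writing `H` for the
harmonic numbers, summing `f(n)/n` over `n ≤ N` gives `H(N) - 2 H(⌊N/p⌋) + H(⌊N/p²⌋)`,
since `d/n` summed over the multiples `n ≤ N` of `d` is `H(⌊N/d⌋)`. As `H(n) = log n + γ + o(1)`, both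
`H(N) - H(⌊N/p⌋)` and `H(⌊N/p⌋) - H(⌊N/p²⌋)` tend to `log p`, so their difference tends to `0`.
-/

open Filter Topology

theorem sum_range_ite_dvd_div_eq_harmonic (d N : ℕ) :
    ∑ n ∈ Finset.range N, (if d ∣ n + 1 then (d : ℝ) / (n + 1) else 0) = harmonic (N / d) := by
  induction N with
  | zero => simp
  | succ N ih =>
    rw [Finset.sum_range_succ, ih, Nat.succ_div]
    split_ifs with h
    · have hd : 0 < d := Nat.pos_of_dvd_of_pos h N.succ_pos
      have hmul : ((N / d + 1 : ℕ) : ℝ) * d = N + 1 := by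
        rw [← Nat.succ_div_of_dvd h]; exact_mod_cast Nat.div_mul_cancel h
      rw [harmonic_succ, Rat.cast_add, Rat.cast_inv, Rat.cast_natCast, ← hmul]
      field_simp
    · simp

theorem tendsto_natCast_div_div_self {p : ℕ} (hp : 0 < p) :
    Tendsto (fun N : ℕ => ((N / p : ℕ) : ℝ) / N) atTop (𝓝 (p : ℝ)⁻¹) := by
  refine ((tendsto_nat_floor_mul_div_atTop (R := ℝ) (a := (p : ℝ)⁻¹) (by positivity)).comp
    tendsto_natCast_atTop_atTop).congr fun N => ?_
  simp [← Nat.floor_div_eq_div (K := ℝ), div_eq_inv_mul]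

theorem tendsto_log_sub_log_div {p : ℕ} (hp : 0 < p) :
    Tendsto (fun N : ℕ => Real.log N - Real.log (N / p : ℕ)) atTop (𝓝 (Real.log p)) := by
  have h := ((tendsto_natCast_div_div_self hp).log (by positivity)).neg
  rw [Real.log_inv, neg_neg] at h
  refine h.congr' ?_
  filter_upwards [eventually_ge_atTop p] with N hN
  have hq : (N / p : ℕ) ≠ 0 := (Nat.div_pos hN hp).ne'
  have hN0 : (N : ℝ) ≠ 0 := by exact_mod_cast (hp.trans_le hN).ne'
  rw [Real.log_div (by exact_mod_cast hq) hN0]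
  ring

theorem tendsto_harmonic_sub_harmonic_div {p : ℕ} (hp : 0 < p) :
    Tendsto (fun N : ℕ => (harmonic N : ℝ) - harmonic (N / p)) atTop (𝓝 (Real.log p)) := by
  have h := (Real.tendsto_harmonic_sub_log.sub
    (Real.tendsto_harmonic_sub_log.comp (Nat.tendsto_div_const_atTop hp.ne'))).add
    (tendsto_log_sub_log_div hp)
  rw [sub_self, zero_add] at h
  refine h.congr fun N => ?_
  simp only [Function.comp_apply]
  ring

theorem tendsto_harmonic_sub_two_mul_harmonic_div_add {p : ℕ} (hp : 0 < p) :
    Tendsto (fun N : ℕ => (harmonic N : ℝ) - 2 * harmonic (N / p) + harmonic (N / p ^ 2))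
      atTop (𝓝 0) := by
  have h := (tendsto_harmonic_sub_harmonic_div hp).sub
    ((tendsto_harmonic_sub_harmonic_div hp).comp (Nat.tendsto_div_const_atTop hp.ne'))
  rw [sub_self] at h
  refine h.congr fun N => ?_
  simp only [Function.comp_apply, Nat.div_div_eq_div_mul, ← pow_two]
  ring

/-- For a prime `p`, the function `f(n) = 1 - 2p·[p ∣ n] + p²·[p² ∣ n]` is
`p²`-periodic, does not vanish on all residues `r` with `1 < gcd(r,p²) < p²`,
and satisfies `∑_{n=1}^∞ f(n)/n = 0`. -/
theorem bbw_condition_one_necessary (p : ℕ) (hp : p.Prime) (f : ℤ → ℤ)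
    (hf : ∀ n : ℤ, f n = 1 - 2 * p * (if (p : ℤ) ∣ n then 1 else 0)
      + (p : ℤ) ^ 2 * (if ((p : ℤ)) ^ 2 ∣ n then 1 else 0)) :
    (∀ n : ℤ, f (n + (p : ℤ) ^ 2) = f n) ∧
    (∃ r : ℤ, 1 < Int.gcd r (p ^ 2) ∧ Int.gcd r (p ^ 2) < p ^ 2 ∧ f r ≠ 0) ∧
    Tendsto (fun N : ℕ => ∑ n ∈ Finset.range N, (f (n + 1) : ℝ) / (n + 1))
      atTop (𝓝 0) := by
  have hp1 := hp.one_lt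
  have hgcd : Int.gcd p ((p : ℤ) ^ 2) = p := by
    rw [pow_two, Int.gcd_mul_left_right, Int.natAbs_natCast]
  refine ⟨fun n => ?_, ⟨p, hgcd.symm ▸ hp1, hgcd.symm ▸ lt_self_pow₀ hp1 one_lt_two, ?_⟩, ?_⟩
  · simp only [hf, dvd_add_left (dvd_pow_self (p : ℤ) two_ne_zero), dvd_add_self_right]
  · have hndvd : ¬ (p : ℤ) ^ 2 ∣ p := fun h => by
      have := Nat.le_of_dvd hp.pos (by exact_mod_cast h)
      nlinarith
    rw [hf, if_pos dvd_rfl, if_neg hndvd]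
    omega
  · -- the constant term is written as the case `d = 1` of `sum_range_ite_dvd_div_eq_harmonic`
    have hterm (n : ℕ) : (f (n + 1) : ℝ) / (n + 1) =
        (if 1 ∣ n + 1 then ((1 : ℕ) : ℝ) / (n + 1) else 0)
          - 2 * (if p ∣ n + 1 then (p : ℝ) / (n + 1) else 0)
          + (if p ^ 2 ∣ n + 1 then ((p ^ 2 : ℕ) : ℝ) / (n + 1) else 0) := by
      have hcast : ((n : ℤ) + 1) = ((n + 1 : ℕ) : ℤ) := by push_cast; ring
      simp only [hf, hcast, ← Nat.cast_pow, Int.natCast_dvd_natCast, one_dvd, if_true]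
      split_ifs <;> push_cast <;> ring
    refine (tendsto_harmonic_sub_two_mul_harmonic_div_add hp.pos).congr fun N => ?_
    simp only [hterm, Finset.sum_add_distrib, Finset.sum_sub_distrib, ← Finset.mul_sum,
      sum_range_ite_dvd_div_eq_harmonic, Nat.div_one]
end
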